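/- Let A be a densely defined closed operator on H with dist(W(A), spec(C)) = δ > 0, where W(A) is the numerical range of A, C normal on K with spectral measure E_C, and D ∈ B(H,K) with finite E_C-norm. Then the strong solution X = ∫_{spec(C)} dE_C(ζ) D (A-ζ)^{-1} of XA - CX = D satisfies ‖X‖_{E_C} ≤ (1/δ) ‖D‖_{E_C}. -/

import Mathlib

/-
The solution `X` is a uniform limit of spectral Riemann sums `S = Σ_p E(Δ_p) D (A - ζ_p)⁻¹` over
grid cells `Δ_p` with tags `ζ_p ∈ spec(C)`, and `‖(A - ζ_p)⁻¹‖ ≤ 1 / dist(ζ_p, W(A)) ≤ 1 / δ`.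
For a Borel set `Ω`, the vectors `E(Ω ∩ Δ_p) D (A - ζ_p)⁻¹ x` are mutually orthogonal, so
`‖S* E(Ω) S‖ = ‖E(Ω) S‖² ≤ δ⁻² Σ_p ‖E(Ω ∩ Δ_p) D‖² = δ⁻² Σ_p ‖D* E(Ω ∩ Δ_p) D‖`.
For disjoint `Ω_1, …, Ω_n` the sets `Ω_i ∩ Δ_p` are again disjoint, so summing over `i` gives
at most `δ⁻² ‖D‖²_E`. This bound is a closed condition on `S`, hence it passes to the limit `X`.
-/

open Set Complex Filter
open scoped InnerProductSpace Topology Classical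

noncomputable section

variable {H K : Type*}
  [NormedAddCommGroup H] [InnerProductSpace ℂ H] [CompleteSpace H]
  [NormedAddCommGroup K] [InnerProductSpace ℂ K] [CompleteSpace K]

/-- A projection-valued (spectral) measure on the Borel subsets of `ℂ`,
acting on the Hilbert space `K`. -/
structure SpectralMeasure (K : Type*) [NormedAddCommGroup K] [InnerProductSpace ℂ K]
    [CompleteSpace K] where
  proj : Set ℂ → K →L[ℂ] K
  selfAdjoint : ∀ {Ω : Set ℂ}, MeasurableSet Ω → IsSelfAdjoint (proj Ω)
  mul_inter : ∀ {Ω Ω' : Set ℂ}, MeasurableSet Ω → MeasurableSet Ω' →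
    proj (Ω ∩ Ω') = (proj Ω).comp (proj Ω')
  add_union : ∀ {Ω Ω' : Set ℂ}, MeasurableSet Ω → MeasurableSet Ω' → Disjoint Ω Ω' →
    proj (Ω ∪ Ω') = proj Ω + proj Ω'
  proj_univ : proj Set.univ = 1

/-- The spectral function `Ê(λ,μ) = E({x+iy : x < λ, y < μ})`. -/
def SpectralMeasure.hatE (E : SpectralMeasure K) (l m : ℝ) : K →L[ℂ] K :=
  E.proj {z : ℂ | z.re < l ∧ z.im < m}

/-- The half-open rectangle `[l,l') × i[m,m')` in `ℂ`. -/
def rectC (l l' m m' : ℝ) : Set ℂ :=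
  {z : ℂ | l ≤ z.re ∧ z.re < l' ∧ m ≤ z.im ∧ z.im < m'}

/-- A tagged partition of the half-open interval `[a,b)` into half-open subintervals,
with a sample point (tag) in each subinterval. -/
structure TaggedPartition (a b : ℝ) where
  n : ℕ
  npos : 0 < n
  pts : ℕ → ℝ
  tags : ℕ → ℝ
  mono : ∀ i < n, pts i < pts (i + 1)
  first : pts 0 = a
  last : pts n = b
  tag_mem : ∀ i < n, pts i ≤ tags i ∧ tags i < pts (i + 1)

/-- The mesh (maximal subinterval length) of a tagged partition. -/
def TaggedPartition.mesh {a b : ℝ} (P : TaggedPartition a b) : ℝ :=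
  sSup {r : ℝ | ∃ i < P.n, r = P.pts (i + 1) - P.pts i}

/-- The Riemann–Stieltjes sum `Σ_j Σ_k F(ξ_j,ζ_k) E(δ_j × ω_k)` for the right integral
`∫ F dE` over the rectangle `[a,b) × [c,d)`. -/
def rightSum (E : SpectralMeasure K) (F : ℝ → ℝ → (K →L[ℂ] H))
    {a b c d : ℝ} (P : TaggedPartition a b) (Q : TaggedPartition c d) : K →L[ℂ] H :=
  ∑ j ∈ Finset.range P.n, ∑ k ∈ Finset.range Q.n,
    (F (P.tags j) (Q.tags k)).comp
      (E.proj (rectC (P.pts j) (P.pts (j + 1)) (Q.pts k) (Q.pts (k + 1))))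

/-- The Riemann–Stieltjes sum `Σ_j Σ_k E(δ_j × ω_k) G(ξ_j,ζ_k)` for the left integral
`∫ dE G` over the rectangle `[a,b) × [c,d)`. -/
def leftSum (E : SpectralMeasure K) (G : ℝ → ℝ → (H →L[ℂ] K))
    {a b c d : ℝ} (P : TaggedPartition a b) (Q : TaggedPartition c d) : H →L[ℂ] K :=
  ∑ j ∈ Finset.range P.n, ∑ k ∈ Finset.range Q.n,
    (E.proj (rectC (P.pts j) (P.pts (j + 1)) (Q.pts k) (Q.pts (k + 1)))).comp
      (G (P.tags j) (Q.tags k))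

/-- `F` is right-integrable w.r.t. `dE` on `[a,b) × [c,d)` in the uniform operator
topology, with integral `J`. -/
def HasRightIntegralUnif (E : SpectralMeasure K) (F : ℝ → ℝ → (K →L[ℂ] H))
    (a b c d : ℝ) (J : K →L[ℂ] H) : Prop :=
  ∀ ε > 0, ∃ δ > 0, ∀ (P : TaggedPartition a b) (Q : TaggedPartition c d),
    P.mesh < δ → Q.mesh < δ → ‖rightSum E F P Q - J‖ < ε

/-- `F` is right-integrable in the strong operator topology. -/
def HasRightIntegralStrong (E : SpectralMeasure K) (F : ℝ → ℝ → (K →L[ℂ] H))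
    (a b c d : ℝ) (J : K →L[ℂ] H) : Prop :=
  ∀ x : K, ∀ ε > 0, ∃ δ > 0, ∀ (P : TaggedPartition a b) (Q : TaggedPartition c d),
    P.mesh < δ → Q.mesh < δ → ‖rightSum E F P Q x - J x‖ < ε

/-- `F` is right-integrable in the weak operator topology. -/
def HasRightIntegralWeak (E : SpectralMeasure K) (F : ℝ → ℝ → (K →L[ℂ] H))
    (a b c d : ℝ) (J : K →L[ℂ] H) : Prop :=
  ∀ (x : K) (y : H), ∀ ε > 0, ∃ δ > 0, ∀ (P : TaggedPartition a b) (Q : TaggedPartition c d),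
    P.mesh < δ → Q.mesh < δ → ‖⟪y, rightSum E F P Q x - J x⟫_ℂ‖ < ε

/-- `G` is left-integrable w.r.t. `dE` on `[a,b) × [c,d)` in the uniform operator
topology, with integral `J`. -/
def HasLeftIntegralUnif (E : SpectralMeasure K) (G : ℝ → ℝ → (H →L[ℂ] K))
    (a b c d : ℝ) (J : H →L[ℂ] K) : Prop :=
  ∀ ε > 0, ∃ δ > 0, ∀ (P : TaggedPartition a b) (Q : TaggedPartition c d),
    P.mesh < δ → Q.mesh < δ → ‖leftSum E G P Q - J‖ < ε

/-- `G` is left-integrable in the strong operator topology. -/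
def HasLeftIntegralStrong (E : SpectralMeasure K) (G : ℝ → ℝ → (H →L[ℂ] K))
    (a b c d : ℝ) (J : H →L[ℂ] K) : Prop :=
  ∀ x : H, ∀ ε > 0, ∃ δ > 0, ∀ (P : TaggedPartition a b) (Q : TaggedPartition c d),
    P.mesh < δ → Q.mesh < δ → ‖leftSum E G P Q x - J x‖ < ε

/-- `G` is left-integrable in the weak operator topology. -/
def HasLeftIntegralWeak (E : SpectralMeasure K) (G : ℝ → ℝ → (H →L[ℂ] K))
    (a b c d : ℝ) (J : H →L[ℂ] K) : Prop :=
  ∀ (x : H) (y : K), ∀ ε > 0, ∃ δ > 0, ∀ (P : TaggedPartition a b) (Q : TaggedPartition c d),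
    P.mesh < δ → Q.mesh < δ → ‖⟪y, leftSum E G P Q x - J x⟫_ℂ‖ < ε

/-- `E` is the spectral measure of the (possibly unbounded) normal operator `C`:
on the range of any spectral projection of a finite rectangle, `C` acts as the
operator Stieltjes integral `∫ z dE(z)`. -/
def SpectralMeasure.Represents (E : SpectralMeasure K) (C : K →ₗ.[ℂ] K) : Prop :=
  ∀ a b c d : ℝ, a < b → c < d → ∀ T : K →L[ℂ] K,
    HasLeftIntegralUnif E (fun l m => ((l : ℂ) + (m : ℂ) * Complex.I) • (1 : K →L[ℂ] K))
      a b c d T →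
    ∀ x : K, ∃ h : E.proj (rectC a b c d) x ∈ C.domain,
      C ⟨E.proj (rectC a b c d) x, h⟩ = T x

/-- The support of a spectral measure; for the spectral measure of a normal
operator `C` this is `spec(C)`. -/
def specSupp (E : SpectralMeasure K) : Set ℂ :=
  {z : ℂ | ∀ ε > 0, E.proj (Metric.ball z ε) ≠ 0}

/-- The set of finite sums `Σ_k ‖Y* E(Ω_k) Y‖` over finite systems of mutually
disjoint Borel subsets of `ℂ`. -/
def EnormSet (E : SpectralMeasure K) (Y : H →L[ℂ] K) : Set ℝ :=
  {r : ℝ | ∃ (n : ℕ) (Ω : ℕ → Set ℂ), (∀ i, MeasurableSet (Ω i)) ∧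
    (∀ i < n, ∀ j < n, i ≠ j → Disjoint (Ω i) (Ω j)) ∧
    r = ∑ i ∈ Finset.range n,
      ‖(ContinuousLinearMap.adjoint Y).comp ((E.proj (Ω i)).comp Y)‖}

/-- The norm `‖Y‖_E` of `Y` with respect to the spectral measure `E`. -/
def Enorm (E : SpectralMeasure K) (Y : H →L[ℂ] K) : ℝ :=
  Real.sqrt (sSup (EnormSet E Y))

/-- `R` is the (bounded, everywhere defined) resolvent `(A - ζ)⁻¹` of the possibly
unbounded operator `A` at the point `ζ`. -/
def IsResolventAt (A : H →ₗ.[ℂ] H) (ζ : ℂ) (R : H →L[ℂ] H) : Prop :=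
  ∃ hmem : ∀ x : H, R x ∈ A.domain,
    (∀ x : H, A ⟨R x, hmem x⟩ - ζ • R x = x) ∧
    (∀ f : A.domain, R (A f - ζ • (f : H)) = f)

/-- The resolvent set of a possibly unbounded operator. -/
def pmResolventSet (A : H →ₗ.[ℂ] H) : Set ℂ := {ζ : ℂ | ∃ R, IsResolventAt A ζ R}

/-- The spectrum of a possibly unbounded operator. -/
def pmSpectrum (A : H →ₗ.[ℂ] H) : Set ℂ := (pmResolventSet A)ᶜ

/-- The numerical range `W(A) = {⟨Ax,x⟩ : x ∈ Dom(A), ‖x‖ = 1}`. -/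
def numRange (A : H →ₗ.[ℂ] H) : Set ℂ :=
  {z : ℂ | ∃ f : A.domain, ‖(f : H)‖ = 1 ∧ z = ⟪(f : H), A f⟫_ℂ}

/-- `X` is a weak solution of the Sylvester equation `XA - CX = D`. -/
def IsWeakSolutionSylvester (A : H →ₗ.[ℂ] H) (C : K →ₗ.[ℂ] K) (D X : H →L[ℂ] K) : Prop :=
  ∀ (f : A.domain) (g : C.adjoint.domain),
    ⟪(g : K), X (A f)⟫_ℂ - ⟪C.adjoint g, X (f : H)⟫_ℂ = ⟪(g : K), D (f : H)⟫_ℂ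

/-- `X` is a strong solution of the Sylvester equation `XA - CX = D`. -/
def IsStrongSolutionSylvester (A : H →ₗ.[ℂ] H) (C : K →ₗ.[ℂ] K) (D X : H →L[ℂ] K) : Prop :=
  ∀ f : A.domain, ∃ h : X (f : H) ∈ C.domain,
    X (A f) - C ⟨X (f : H), h⟩ = D (f : H)

/-- `X` is a weak solution of the Riccati equation `XA - CX + XBX = D`. -/
def IsWeakSolutionRiccati (A : H →ₗ.[ℂ] H) (C : K →ₗ.[ℂ] K) (B : K →L[ℂ] H)
    (D X : H →L[ℂ] K) : Prop :=
  ∀ (f : A.domain) (g : C.adjoint.domain),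
    ⟪(g : K), X (A f)⟫_ℂ - ⟪C.adjoint g, X (f : H)⟫_ℂ
      + ⟪(g : K), X (B (X (f : H)))⟫_ℂ = ⟪(g : K), D (f : H)⟫_ℂ

/-- `X` is a strong solution of the Riccati equation `XA - CX + XBX = D`. -/
def IsStrongSolutionRiccati (A : H →ₗ.[ℂ] H) (C : K →ₗ.[ℂ] K) (B : K →L[ℂ] H)
    (D X : H →L[ℂ] K) : Prop :=
  ∀ f : A.domain, ∃ h : X (f : H) ∈ C.domain,
    X (A f) - C ⟨X (f : H), h⟩ + X (B (X (f : H))) = D (f : H)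

/-- The Riemann–Stieltjes sum for the left integral `∫_{spec(C) ∩ Ω} dE(ζ) G(ζ)`:
only partition rectangles meeting the spectrum contribute, with tags `tag j k`
chosen per rectangle. -/
def specLeftSum (E : SpectralMeasure K) (G : ℂ → (H →L[ℂ] K))
    {a b c d : ℝ} (P : TaggedPartition a b) (Q : TaggedPartition c d)
    (tag : ℕ → ℕ → ℂ) : H →L[ℂ] K :=
  ∑ j ∈ Finset.range P.n, ∑ k ∈ Finset.range Q.n,
    if (rectC (P.pts j) (P.pts (j + 1)) (Q.pts k) (Q.pts (k + 1)) ∩ specSupp E).Nonempty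
    then (E.proj (rectC (P.pts j) (P.pts (j + 1)) (Q.pts k) (Q.pts (k + 1)))).comp
      (G (tag j k))
    else 0

/-- Admissible tags for a spectral Riemann–Stieltjes sum: whenever a partition
rectangle meets the spectrum, the tag is taken in the intersection. -/
def ValidTags (E : SpectralMeasure K) {a b c d : ℝ}
    (P : TaggedPartition a b) (Q : TaggedPartition c d) (tag : ℕ → ℕ → ℂ) : Prop :=
  ∀ j < P.n, ∀ k < Q.n,
    (rectC (P.pts j) (P.pts (j + 1)) (Q.pts k) (Q.pts (k + 1)) ∩ specSupp E).Nonempty →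
    tag j k ∈ rectC (P.pts j) (P.pts (j + 1)) (Q.pts k) (Q.pts (k + 1)) ∩ specSupp E

/-- Convergence of `∫_{spec(C) ∩ ([a,b)×i[c,d))} dE(ζ) G(ζ)` in the strong operator
topology. -/
def HasSpecLeftIntegralStrong (E : SpectralMeasure K) (G : ℂ → (H →L[ℂ] K))
    (a b c d : ℝ) (J : H →L[ℂ] K) : Prop :=
  ∀ x : H, ∀ ε > 0, ∃ δ > 0, ∀ (P : TaggedPartition a b) (Q : TaggedPartition c d)
    (tag : ℕ → ℕ → ℂ), ValidTags E P Q tag → P.mesh < δ → Q.mesh < δ →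
    ‖specLeftSum E G P Q tag x - J x‖ < ε

/-- Convergence of `∫_{spec(C) ∩ ([a,b)×i[c,d))} dE(ζ) G(ζ)` in the uniform operator
topology. -/
def HasSpecLeftIntegralUnif (E : SpectralMeasure K) (G : ℂ → (H →L[ℂ] K))
    (a b c d : ℝ) (J : H →L[ℂ] K) : Prop :=
  ∀ ε > 0, ∃ δ > 0, ∀ (P : TaggedPartition a b) (Q : TaggedPartition c d)
    (tag : ℕ → ℕ → ℂ), ValidTags E P Q tag → P.mesh < δ → Q.mesh < δ →
    ‖specLeftSum E G P Q tag - J‖ < ε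

/-- The improper integral `∫_{spec(C)} dE(ζ) G(ζ)` in the strong operator topology:
the strong limit, over exhausting finite rectangles, of the integrals over
`spec(C) ∩ ([a,b) × i[c,d))`. -/
def HasImproperSpecLeftIntegralStrong (E : SpectralMeasure K) (G : ℂ → (H →L[ℂ] K))
    (J : H →L[ℂ] K) : Prop :=
  ∃ Jr : ℝ → ℝ → ℝ → ℝ → (H →L[ℂ] K),
    (∀ a b c d : ℝ, a < b → c < d → HasSpecLeftIntegralStrong E G a b c d (Jr a b c d)) ∧
    ∀ x : H, ∀ ε > 0, ∃ R : ℝ, ∀ a b c d : ℝ, a ≤ -R → R ≤ b → c ≤ -R → R ≤ d →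
      ‖Jr a b c d x - J x‖ < ε

/-- The improper integral `∫_{spec(C)} dE(ζ) G(ζ)` in the uniform operator topology. -/
def HasImproperSpecLeftIntegralUnif (E : SpectralMeasure K) (G : ℂ → (H →L[ℂ] K))
    (J : H →L[ℂ] K) : Prop :=
  ∃ Jr : ℝ → ℝ → ℝ → ℝ → (H →L[ℂ] K),
    (∀ a b c d : ℝ, a < b → c < d → HasSpecLeftIntegralUnif E G a b c d (Jr a b c d)) ∧
    ∀ ε > 0, ∃ R : ℝ, ∀ a b c d : ℝ, a ≤ -R → R ≤ b → c ≤ -R → R ≤ d →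
      ‖Jr a b c d - J‖ < ε

/-- The improper left integral `∫_{ℝ²} dE G` (uniform operator topology) as a limit
over exhausting finite rectangles. -/
def HasImproperLeftIntegralUnif (E : SpectralMeasure K) (G : ℝ → ℝ → (H →L[ℂ] K))
    (J : H →L[ℂ] K) : Prop :=
  ∃ Jr : ℝ → ℝ → ℝ → ℝ → (H →L[ℂ] K),
    (∀ a b c d : ℝ, a < b → c < d → HasLeftIntegralUnif E G a b c d (Jr a b c d)) ∧
    ∀ ε > 0, ∃ R : ℝ, ∀ a b c d : ℝ, a ≤ -R → R ≤ b → c ≤ -R → R ≤ d →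
      ‖Jr a b c d - J‖ < ε

theorem norm_sum_sq_eq_sum_norm_sq_of_inner_eq_zero {ι 𝕜 V : Type*} [RCLike 𝕜]
    [NormedAddCommGroup V] [InnerProductSpace 𝕜 V] (s : Finset ι) (f : ι → V)
    (h : ∀ i ∈ s, ∀ j ∈ s, i ≠ j → ⟪f i, f j⟫_𝕜 = 0) :
    ‖∑ i ∈ s, f i‖ ^ 2 = ∑ i ∈ s, ‖f i‖ ^ 2 := by
  have hdiag : ⟪∑ i ∈ s, f i, ∑ j ∈ s, f j⟫_𝕜 = ∑ i ∈ s, ⟪f i, f i⟫_𝕜 := by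
    rw [sum_inner]
    refine Finset.sum_congr rfl fun i hi => ?_
    rw [inner_sum, Finset.sum_eq_single i (fun j hj hji => h i hi j hj hji.symm)
      (fun hi' => absurd hi hi')]
  rw [← inner_self_eq_norm_sq (𝕜 := 𝕜), hdiag, map_sum]
  exact Finset.sum_congr rfl fun i _ => inner_self_eq_norm_sq _

theorem ContinuousLinearMap.opNorm_sq_le_of_sq_le {𝕜 V W : Type*} [NontriviallyNormedField 𝕜]
    [SeminormedAddCommGroup V] [SeminormedAddCommGroup W] [NormedSpace 𝕜 V] [NormedSpace 𝕜 W]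
    (T : V →L[𝕜] W) {M : ℝ} (hM : 0 ≤ M) (h : ∀ x, ‖T x‖ ^ 2 ≤ M * ‖x‖ ^ 2) :
    ‖T‖ ^ 2 ≤ M := by
  have hT : ‖T‖ ≤ √M := T.opNorm_le_bound (Real.sqrt_nonneg M) fun x => by
    rw [← Real.sqrt_sq (norm_nonneg (T x)), ← Real.sqrt_sq (norm_nonneg x), ← Real.sqrt_mul hM]
    exact Real.sqrt_le_sqrt (h x)
  simpa [Real.sq_sqrt hM] using pow_le_pow_left₀ (norm_nonneg T) hT 2

theorem Metric.inv_infDist_le_inv {α : Type*} [PseudoMetricSpace α] {s : Set α} {z : α} {δ : ℝ}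
    (hδ : 0 < δ) (h : ∀ w ∈ s, δ ≤ dist z w) : (Metric.infDist z s)⁻¹ ≤ δ⁻¹ := by
  rcases s.eq_empty_or_nonempty with rfl | hs
  · simp [hδ.le]
  · exact inv_anti₀ hδ ((Metric.le_infDist hs).2 h)

theorem rectC_eq (l l' m m' : ℝ) :
    rectC l l' m m' = re ⁻¹' Ico l l' ∩ im ⁻¹' Ico m m' := by
  ext z
  simp [rectC, and_assoc]

theorem measurableSet_rectC (l l' m m' : ℝ) : MeasurableSet (rectC l l' m m') := by
  rw [rectC_eq]
  exact (measurable_re measurableSet_Ico).inter (measurable_im measurableSet_Ico)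

namespace SpectralMeasure

variable (E : SpectralMeasure K)

theorem proj_empty : E.proj ∅ = 0 := by
  have h := E.add_union MeasurableSet.empty MeasurableSet.empty (disjoint_empty ∅)
  rw [union_empty] at h
  simpa using h

theorem inner_proj_proj {Ω Ω' : Set ℂ} (hΩ : MeasurableSet Ω) (hΩ' : MeasurableSet Ω')
    (u v : K) : ⟪E.proj Ω u, E.proj Ω' v⟫_ℂ = ⟪u, E.proj (Ω ∩ Ω') v⟫_ℂ := by
  rw [← ContinuousLinearMap.adjoint_inner_right, (E.selfAdjoint hΩ).adjoint_eq,
    E.mul_inter hΩ hΩ']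
  rfl

theorem inner_proj_proj_of_disjoint {Ω Ω' : Set ℂ} (hΩ : MeasurableSet Ω)
    (hΩ' : MeasurableSet Ω') (h : Disjoint Ω Ω') (u v : K) :
    ⟪E.proj Ω u, E.proj Ω' v⟫_ℂ = 0 := by
  rw [inner_proj_proj E hΩ hΩ', h.inter_eq, proj_empty, zero_apply,
    inner_zero_right]

theorem norm_adjoint_comp_proj_comp {Ω : Set ℂ} (hΩ : MeasurableSet Ω) (Y : H →L[ℂ] K) :
    ‖(ContinuousLinearMap.adjoint Y).comp ((E.proj Ω).comp Y)‖ = ‖(E.proj Ω).comp Y‖ ^ 2 := by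
  have hidem : (E.proj Ω).comp (E.proj Ω) = E.proj Ω := by
    rw [← E.mul_inter hΩ hΩ, inter_self]
  rw [sq, ← ContinuousLinearMap.norm_adjoint_comp_self, ContinuousLinearMap.adjoint_comp,
    (E.selfAdjoint hΩ).adjoint_eq, ContinuousLinearMap.comp_assoc,
    ← ContinuousLinearMap.comp_assoc (E.proj Ω), hidem]

theorem norm_sum_proj_sq {ι : Type*} (s : Finset ι) (Ω : ι → Set ℂ)
    (hΩ : ∀ i ∈ s, MeasurableSet (Ω i)) (hdisj : (s : Set ι).PairwiseDisjoint Ω) (v : ι → K) :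
    ‖∑ i ∈ s, E.proj (Ω i) (v i)‖ ^ 2 = ∑ i ∈ s, ‖E.proj (Ω i) (v i)‖ ^ 2 :=
  norm_sum_sq_eq_sum_norm_sq_of_inner_eq_zero s _ fun i hi j hj hij =>
    E.inner_proj_proj_of_disjoint (hΩ i hi) (hΩ j hj) (hdisj hi hj hij) _ _

end SpectralMeasure

theorem zero_mem_EnormSet (E : SpectralMeasure K) (Y : H →L[ℂ] K) : 0 ∈ EnormSet E Y :=
  ⟨0, fun _ => ∅, fun _ => MeasurableSet.empty, fun _ h => absurd h (Nat.not_lt_zero _), by simp⟩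

theorem sum_mem_EnormSet {ι : Type*} (E : SpectralMeasure K) (Y : H →L[ℂ] K) (s : Finset ι)
    (Ω : ι → Set ℂ) (hΩ : ∀ i ∈ s, MeasurableSet (Ω i)) (hdisj : (s : Set ι).PairwiseDisjoint Ω) :
    ∑ i ∈ s, ‖(ContinuousLinearMap.adjoint Y).comp ((E.proj (Ω i)).comp Y)‖ ∈ EnormSet E Y := by
  set e := s.equivFin
  set Ω' : ℕ → Set ℂ := fun m => if h : m < s.card then Ω (e.symm ⟨m, h⟩) else ∅
  refine ⟨s.card, Ω', fun m => ?_, fun m hm m' hm' hne => ?_, ?_⟩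
  · by_cases h : m < s.card
    · simpa [Ω', h] using hΩ _ (e.symm ⟨m, h⟩).2
    · simp [Ω', h]
  · simp only [Ω', dif_pos hm, dif_pos hm']
    refine hdisj (e.symm _).2 (e.symm _).2 fun heq => hne ?_
    simpa using e.symm.injective (Subtype.ext heq)
  · rw [Finset.sum_range, ← s.sum_coe_sort, ← e.symm.sum_comp]
    simp [Ω']

namespace TaggedPartition

variable {a b c d : ℝ}

theorem pts_le_pts (P : TaggedPartition a b) {i j : ℕ} (hij : i ≤ j) (hj : j ≤ P.n) :
    P.pts i ≤ P.pts j :=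
  (strictMonoOn_Iic_of_lt_succ P.mono).monotoneOn (hij.trans hj) hj hij

theorem disjoint_Ico_pts (P : TaggedPartition a b) {i j : ℕ} (hj : j < P.n) (hij : i < j) :
    Disjoint (Ico (P.pts i) (P.pts (i + 1))) (Ico (P.pts j) (P.pts (j + 1))) :=
  Ico_disjoint_Ico_same.mono_right (Ico_subset_Ico_left (P.pts_le_pts hij hj.le))

def uniform (hab : a < b) (n : ℕ) (hn : 0 < n) : TaggedPartition a b where
  n := n
  npos := hn
  pts i := a + i * ((b - a) / n)
  tags i := a + i * ((b - a) / n)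
  mono i _ := by
    have : 0 < (b - a) / n := div_pos (by linarith) (by exact_mod_cast hn)
    push_cast
    linarith
  first := by simp
  last := by
    field_simp
    ring
  tag_mem i _ := by
    have : 0 < (b - a) / n := div_pos (by linarith) (by exact_mod_cast hn)
    push_cast
    constructor <;> linarith

theorem mesh_uniform_le (hab : a < b) (n : ℕ) (hn : 0 < n) :
    (uniform hab n hn).mesh ≤ (b - a) / n := by
  refine csSup_le ⟨_, 0, hn, rfl⟩ ?_
  rintro r ⟨i, -, rfl⟩
  simp only [uniform]
  push_cast
  linarith

theorem exists_mesh_lt (hab : a < b) {ε : ℝ} (hε : 0 < ε) :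
    ∃ P : TaggedPartition a b, P.mesh < ε := by
  have hn : 0 < ⌊(b - a) / ε⌋₊ + 1 := Nat.succ_pos _
  refine ⟨uniform hab _ hn, (mesh_uniform_le hab _ hn).trans_lt ?_⟩
  rw [div_lt_comm₀ (by exact_mod_cast hn) hε]
  exact_mod_cast Nat.lt_floor_add_one _

def cell (P : TaggedPartition a b) (Q : TaggedPartition c d) (p : ℕ × ℕ) : Set ℂ :=
  rectC (P.pts p.1) (P.pts (p.1 + 1)) (Q.pts p.2) (Q.pts (p.2 + 1))

def cellIndices (P : TaggedPartition a b) (Q : TaggedPartition c d) : Finset (ℕ × ℕ) :=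
  Finset.range P.n ×ˢ Finset.range Q.n

variable (P : TaggedPartition a b) (Q : TaggedPartition c d)

theorem measurableSet_cell (p : ℕ × ℕ) : MeasurableSet (P.cell Q p) :=
  measurableSet_rectC _ _ _ _

theorem pairwiseDisjoint_cell : (P.cellIndices Q : Set (ℕ × ℕ)).PairwiseDisjoint (P.cell Q) := by
  rintro ⟨j, k⟩ hp ⟨j', k'⟩ hp' hne
  simp only [cellIndices, Finset.coe_product, Finset.coe_range, mem_prod, mem_Iio] at hp hp'
  simp only [Function.onFun, cell, rectC_eq]
  rcases lt_trichotomy j j' with h | rfl | h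
  · exact ((P.disjoint_Ico_pts hp'.1 h).preimage re).mono inter_subset_left inter_subset_left
  · have hk : k ≠ k' := fun h => hne (by rw [h])
    rcases hk.lt_or_gt with h | h
    · exact ((Q.disjoint_Ico_pts hp'.2 h).preimage im).mono inter_subset_right inter_subset_right
    · exact ((Q.disjoint_Ico_pts hp.2 h).symm.preimage im).mono inter_subset_right
        inter_subset_right
  · exact ((P.disjoint_Ico_pts hp.1 h).symm.preimage re).mono inter_subset_left inter_subset_left

end TaggedPartition

theorem exists_validTags (E : SpectralMeasure K) {a b c d : ℝ} (P : TaggedPartition a b)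
    (Q : TaggedPartition c d) : ∃ tag : ℕ → ℕ → ℂ, ValidTags E P Q tag := by
  have h (j k : ℕ) : ∃ z : ℂ,
      (P.cell Q (j, k) ∩ specSupp E).Nonempty → z ∈ P.cell Q (j, k) ∩ specSupp E := by
    by_cases hne : (P.cell Q (j, k) ∩ specSupp E).Nonempty
    · exact ⟨hne.some, fun _ => hne.some_mem⟩
    · exact ⟨0, fun h => absurd h hne⟩
  choose tag htag using h
  exact ⟨tag, fun j _ k _ => htag j k⟩

theorem mem_closure_specLeftSum {V : Type*} [NormedAddCommGroup V] [InnerProductSpace ℂ V]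
    (E : SpectralMeasure K) (G : ℂ → (V →L[ℂ] K)) (X : V →L[ℂ] K)
    (hX : HasImproperSpecLeftIntegralUnif E G X) :
    X ∈ closure {S | ∃ (a b c d : ℝ) (P : TaggedPartition a b) (Q : TaggedPartition c d)
      (tag : ℕ → ℕ → ℂ), ValidTags E P Q tag ∧ specLeftSum E G P Q tag = S} := by
  obtain ⟨Jr, hJr, hlim⟩ := hX
  refine Metric.mem_closure_iff.2 fun ε hε => ?_
  obtain ⟨R, hR⟩ := hlim (ε / 2) (half_pos hε)
  set r := |R| + 1
  have hRr : R ≤ r := (le_abs_self R).trans (lt_add_one _).le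
  have hr : -r < r := by have := abs_nonneg R; linarith
  obtain ⟨η, hη, hJ⟩ := hJr (-r) r (-r) r hr hr (ε / 2) (half_pos hε)
  obtain ⟨P, hP⟩ := TaggedPartition.exists_mesh_lt hr hη
  obtain ⟨Q, hQ⟩ := TaggedPartition.exists_mesh_lt hr hη
  obtain ⟨tag, htag⟩ := exists_validTags E P Q
  refine ⟨_, ⟨_, _, _, _, P, Q, tag, htag, rfl⟩, ?_⟩
  calc dist X (specLeftSum E G P Q tag)
      ≤ ‖Jr (-r) r (-r) r - X‖ + ‖specLeftSum E G P Q tag - Jr (-r) r (-r) r‖ := by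
        rw [dist_comm, dist_eq_norm, add_comm]
        exact norm_sub_le_norm_sub_add_norm_sub _ _ _
    _ < ε / 2 + ε / 2 := add_lt_add (hR _ _ _ _ (neg_le_neg hRr) hRr (neg_le_neg hRr) hRr)
        (hJ P Q tag htag hP hQ)
    _ = ε := add_halves ε

section SpectralRiemannSum

variable {V : Type*} [NormedAddCommGroup V] [InnerProductSpace ℂ V]
  (E : SpectralMeasure K) {a b c d : ℝ} (P : TaggedPartition a b) (Q : TaggedPartition c d)
  (tag : ℕ → ℕ → ℂ)

theorem proj_comp_specLeftSum_apply {Ω : Set ℂ} (hΩ : MeasurableSet Ω) (G : ℂ → (V →L[ℂ] K))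
    (x : V) :
    ((E.proj Ω).comp (specLeftSum E G P Q tag)) x = ∑ p ∈ P.cellIndices Q,
      E.proj (Ω ∩ P.cell Q p)
        (if (P.cell Q p ∩ specSupp E).Nonempty then G (tag p.1 p.2) x else 0) := by
  simp only [specLeftSum, TaggedPartition.cellIndices, TaggedPartition.cell, Finset.sum_product,
    ContinuousLinearMap.comp_apply, FunLike.coe_sum, Finset.sum_apply, map_sum]
  refine Finset.sum_congr rfl fun j _ => Finset.sum_congr rfl fun k _ => ?_
  split_ifs with hmeet <;> simp [hmeet, E.mul_inter hΩ (measurableSet_rectC _ _ _ _)]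

theorem norm_proj_comp_specLeftSum_sq_le {Ω : Set ℂ} (hΩ : MeasurableSet Ω) (D : V →L[ℂ] K)
    (R : ℂ → (V →L[ℂ] V)) {M : ℝ} (hM : 0 ≤ M) (hR : ∀ ζ ∈ specSupp E, ‖R ζ‖ ≤ M)
    (htag : ValidTags E P Q tag) :
    ‖(E.proj Ω).comp (specLeftSum E (fun ζ => D.comp (R ζ)) P Q tag)‖ ^ 2
      ≤ M ^ 2 * ∑ p ∈ P.cellIndices Q, ‖(E.proj (Ω ∩ P.cell Q p)).comp D‖ ^ 2 := by
  refine ContinuousLinearMap.opNorm_sq_le_of_sq_le _ (by positivity) fun x => ?_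
  have hcell : ∀ p ∈ P.cellIndices Q, ‖E.proj (Ω ∩ P.cell Q p)
      (if (P.cell Q p ∩ specSupp E).Nonempty then D.comp (R (tag p.1 p.2)) x else 0)‖
        ≤ ‖(E.proj (Ω ∩ P.cell Q p)).comp D‖ * (M * ‖x‖) := by
    intro p hp
    simp only [TaggedPartition.cellIndices, Finset.mem_product, Finset.mem_range] at hp
    split_ifs with hmeet
    · have hζ : tag p.1 p.2 ∈ specSupp E := (htag p.1 hp.1 p.2 hp.2 hmeet).2
      exact ((E.proj (Ω ∩ P.cell Q p)).comp D).le_opNorm_of_le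
        ((R _).le_of_opNorm_le (hR _ hζ) x)
    · rw [map_zero, norm_zero]
      positivity
  rw [proj_comp_specLeftSum_apply E P Q tag hΩ, E.norm_sum_proj_sq _ _
    (fun p _ => hΩ.inter (P.measurableSet_cell Q p))
    ((P.pairwiseDisjoint_cell Q).mono_on fun _ _ => inter_subset_right)]
  calc _ ≤ ∑ p ∈ P.cellIndices Q, (‖(E.proj (Ω ∩ P.cell Q p)).comp D‖ * (M * ‖x‖)) ^ 2 :=
        Finset.sum_le_sum fun p hp => pow_le_pow_left₀ (norm_nonneg _) (hcell p hp) 2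
    _ = _ := by
        rw [Finset.mul_sum, Finset.sum_mul]
        exact Finset.sum_congr rfl fun p _ => by ring

end SpectralRiemannSum

theorem sum_norm_proj_comp_specLeftSum_sq_le (E : SpectralMeasure K) (D : H →L[ℂ] K)
    (hD : BddAbove (EnormSet E D)) (R : ℂ → (H →L[ℂ] H)) {M : ℝ} (hM : 0 ≤ M)
    (hR : ∀ ζ ∈ specSupp E, ‖R ζ‖ ≤ M) {a b c d : ℝ} (P : TaggedPartition a b)
    (Q : TaggedPartition c d) {tag : ℕ → ℕ → ℂ} (htag : ValidTags E P Q tag) {n : ℕ}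
    {Ω : ℕ → Set ℂ} (hΩ : ∀ i, MeasurableSet (Ω i))
    (hdisj : ∀ i < n, ∀ j < n, i ≠ j → Disjoint (Ω i) (Ω j)) :
    ∑ i ∈ Finset.range n,
        ‖(E.proj (Ω i)).comp (specLeftSum E (fun ζ => D.comp (R ζ)) P Q tag)‖ ^ 2
      ≤ M ^ 2 * sSup (EnormSet E D) := by
  set s := Finset.range n ×ˢ P.cellIndices Q
  set Ψ : ℕ × (ℕ × ℕ) → Set ℂ := fun q => Ω q.1 ∩ P.cell Q q.2
  have hΨ : ∀ q ∈ s, MeasurableSet (Ψ q) := fun q _ => (hΩ _).inter (P.measurableSet_cell Q _)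
  have hΨdisj : (s : Set (ℕ × (ℕ × ℕ))).PairwiseDisjoint Ψ := by
    rintro ⟨i, p⟩ hq ⟨i', p'⟩ hq' hne
    simp only [s, Finset.coe_product, Finset.coe_range, mem_prod, mem_Iio] at hq hq'
    by_cases hi : i = i'
    · subst hi
      exact (P.pairwiseDisjoint_cell Q hq.2 hq'.2 fun h => hne (by rw [h])).mono
        inter_subset_right inter_subset_right
    · exact (hdisj i hq.1 i' hq'.1 hi).mono inter_subset_left inter_subset_left
  calc _ ≤ ∑ i ∈ Finset.range n,
          M ^ 2 * ∑ p ∈ P.cellIndices Q, ‖(E.proj (Ω i ∩ P.cell Q p)).comp D‖ ^ 2 :=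
        Finset.sum_le_sum fun i _ =>
          norm_proj_comp_specLeftSum_sq_le E P Q tag (hΩ i) D R hM hR htag
    _ = M ^ 2 * ∑ q ∈ s, ‖(ContinuousLinearMap.adjoint D).comp ((E.proj (Ψ q)).comp D)‖ := by
        rw [← Finset.mul_sum, Finset.sum_product]
        simp only [Ψ, E.norm_adjoint_comp_proj_comp ((hΩ _).inter (P.measurableSet_cell Q _))]
    _ ≤ M ^ 2 * sSup (EnormSet E D) := by
        gcongr
        exact le_csSup hD (sum_mem_EnormSet E D s Ψ hΨ hΨdisj)

theorem sylvester_Enorm_numrange_bound_general (A : H →ₗ.[ℂ] H)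
    (E : SpectralMeasure K) (D : H →L[ℂ] K)
    (δ : ℝ) (hδ0 : 0 < δ)
    (hδ : ∀ z ∈ specSupp E, ∀ w ∈ numRange A, δ ≤ dist z w)
    (RA : ℂ → (H →L[ℂ] H))
    (hRAbound : ∀ ζ ∈ specSupp E, ‖RA ζ‖ ≤ (Metric.infDist ζ (numRange A))⁻¹)
    (hD : BddAbove (EnormSet E D)) :
    ∀ X : H →L[ℂ] K,
      HasImproperSpecLeftIntegralUnif E (fun ζ => D.comp (RA ζ)) X →
      BddAbove (EnormSet E X) ∧ Enorm E X ≤ δ⁻¹ * Enorm E D := by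
  intro X hX
  have hRA : ∀ ζ ∈ specSupp E, ‖RA ζ‖ ≤ δ⁻¹ := fun ζ hζ =>
    (hRAbound ζ hζ).trans (Metric.inv_infDist_le_inv hδ0 (hδ ζ hζ))
  have hbound : ∀ r ∈ EnormSet E X, r ≤ δ⁻¹ ^ 2 * sSup (EnormSet E D) := by
    rintro r ⟨n, Ω, hΩ, hdisj, rfl⟩
    simp only [E.norm_adjoint_comp_proj_comp (hΩ _)]
    have hclosed : IsClosed {Y : H →L[ℂ] K |
        ∑ i ∈ Finset.range n, ‖(E.proj (Ω i)).comp Y‖ ^ 2 ≤ δ⁻¹ ^ 2 * sSup (EnormSet E D)} :=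
      isClosed_le (by fun_prop) continuous_const
    refine hclosed.closure_subset_iff.2 ?_ (mem_closure_specLeftSum E _ X hX)
    rintro _ ⟨a, b, c, d, P, Q, tag, htag, rfl⟩
    exact sum_norm_proj_comp_specLeftSum_sq_le E D hD RA (by positivity) hRA P Q htag hΩ hdisj
  refine ⟨⟨_, hbound⟩, ?_⟩
  calc Enorm E X ≤ √(δ⁻¹ ^ 2 * sSup (EnormSet E D)) :=
        Real.sqrt_le_sqrt (csSup_le ⟨0, zero_mem_EnormSet E X⟩ hbound)
    _ = δ⁻¹ * Enorm E D := by
        rw [Real.sqrt_mul (by positivity), Real.sqrt_sq (by positivity)]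
        rfl

/-- if `dist(W(A), spec(C)) = δ > 0` and `‖D‖_{E_C} < ∞`, then the
strong solution `X = ∫_{spec(C)} dE_C(ζ) D (A-ζ)⁻¹` of `XA - CX = D` satisfies
`‖X‖_{E_C} ≤ δ⁻¹ ‖D‖_{E_C}` (the resolvent estimate
`‖(A-ζ)⁻¹‖ ≤ 1/dist(ζ, W(A))` being assumed). -/
theorem sylvester_Enorm_numrange_bound (A : H →ₗ.[ℂ] H)
    (hAd : Dense (A.domain : Set H)) (hAc : A.IsClosed)
    (E : SpectralMeasure K) (D : H →L[ℂ] K)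
    (δ : ℝ) (hδ0 : 0 < δ)
    (hδ : ∀ z ∈ specSupp E, ∀ w ∈ numRange A, δ ≤ dist z w)
    (RA : ℂ → (H →L[ℂ] H)) (hRA : ∀ ζ ∈ specSupp E, IsResolventAt A ζ (RA ζ))
    (hRAbound : ∀ ζ ∈ specSupp E, ‖RA ζ‖ ≤ (Metric.infDist ζ (numRange A))⁻¹)
    (hD : BddAbove (EnormSet E D)) :
    ∀ X : H →L[ℂ] K,
      HasImproperSpecLeftIntegralUnif E (fun ζ => D.comp (RA ζ)) X →
      BddAbove (EnormSet E X) ∧ Enorm E X ≤ δ⁻¹ * Enorm E D :=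
  sylvester_Enorm_numrange_bound_general A E D δ hδ0 hδ RA hRAbound hD

end
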